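/- Let ε_s and ε_t be the source and target risks of hypotheses, and let γ = min_{h∈H} (ε_s(h) + ε_t(h)). If for every h ∈ H, |ε_t(h) − ε_s(h)| ≤ γ + Δ for some Δ ≥ 0, ĥ minimizes the empirical source error ε̂_s over H, |ε̂_s(h) − ε_s(h)| ≤ η for all h ∈ H, and h* minimizes ε_t over H, then ε_t(ĥ) ≤ ε_t(h*) + 2η + 2γ + 2Δ. -/
import Mathlib


/-- Error-decomposition chain for Theorem 2: combining the domain-divergence
bound `Δ`, agreement term `γ`, and uniform estimation error `η` gives
`ε_t(ĥ) ≤ ε_t(h*) + 2η + 2γ + 2Δ`. -/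
theorem error_decomposition {H : Type*} (εs εt εhat : H → ℝ)
    (γ Δ η : ℝ) (hΔ : 0 ≤ Δ)
    (hγ : ∀ h, γ ≤ εs h + εt h)
    (hdev : ∀ h, |εt h - εs h| ≤ γ + Δ)
    (hunif : ∀ h, |εhat h - εs h| ≤ η)
    (hhat hstar : H)
    (hhat_min : ∀ h, εhat hhat ≤ εhat h)
    (hstar_min : ∀ h, εt hstar ≤ εt h) :
    εt hhat ≤ εt hstar + 2 * η + 2 * γ + 2 * Δ := by
  have d1 := abs_le.1 (hdev hhat)
  have d2 := abs_le.1 (hdev hstar)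
  have u1 := abs_le.1 (hunif hhat)
  have u2 := abs_le.1 (hunif hstar)
  have m := hhat_min hstar
  linarith
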